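/- Let M, P₀ ∈ Sym(n,ℝ) with M invertible, P₀ − M positive definite, and let Λ²², Q²² ∈ Sym(n,ℝ) be related by Q²² = M − M(M+Λ²²)⁻¹M where M + Λ²² is negative definite. Let Υ(P₀) = −M − M(P₀−M)⁻¹M. Then Υ(P₀) + Q²² is negative definite if and only if P₀ + Λ²² is negative definite. -/

import Mathlib

/-!
Put `X = P₀ - M` and `Y = -(M + Λ²²)`, both positive definite. Then
`-(Υ(P₀) + Q²²) = M (X⁻¹ - Y⁻¹) M`, a congruence by the invertible symmetric `M`, so it is
positive definite iff `X⁻¹ - Y⁻¹` is. Inversion reverses the strict Loewner order on positive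
definite matrices, hence this holds iff `Y - X = -(P₀ + Λ²²)` is positive definite.
-/

open Matrix

namespace Matrix

variable {n : Type*} [Fintype n] [DecidableEq n]

lemma inv_neg {α : Type*} [CommRing α] (A : Matrix n n α) : (-A)⁻¹ = -A⁻¹ := by
  by_cases h : IsUnit A
  · exact inv_eq_left_inv (by simp [(isUnit_iff_isUnit_det A).mp h])
  · have h' : ¬IsUnit (-A) := (IsUnit.neg_iff A).not.mpr h
    rw [isUnit_iff_isUnit_det] at h h'
    rw [nonsing_inv_apply_not_isUnit _ h, nonsing_inv_apply_not_isUnit _ h', neg_zero]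

variable {K : Type*} [Field K] [PartialOrder K] [StarRing K] [StarOrderedRing K]

lemma PosDef.inv_sub_inv {X Y : Matrix n n K} (hX : X.PosDef) (hY : Y.PosDef)
    (hYX : (Y - X).PosDef) : (X⁻¹ - Y⁻¹).PosDef := by
  have : Invertible X := hX.isUnit.invertible
  have : Invertible Y := hY.isUnit.invertible
  have hdecomp : X⁻¹ - Y⁻¹ =
      Y⁻¹ * (Y - X) * star Y⁻¹ + (Y⁻¹ * (Y - X)) * X⁻¹ * (Y⁻¹ * (Y - X))ᴴ := by
    rw [star_eq_conjTranspose, conjTranspose_mul, hYX.isHermitian.eq, hY.inv.isHermitian.eq]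
    simp only [mul_sub, sub_mul, mul_assoc, inv_mul_of_invertible, mul_inv_of_invertible,
      mul_one, one_mul, inv_mul_cancel_left_of_invertible]
    abel
  have hfirst : (Y⁻¹ * (Y - X) * star Y⁻¹).PosDef :=
    (isUnit_nonsing_inv_iff.mpr hY.isUnit).posDef_star_right_conjugate_iff.mpr hYX
  rw [hdecomp]
  exact hfirst.add_posSemidef (hX.inv.posSemidef.mul_mul_conjTranspose_same _)

lemma posDef_inv_sub_inv_iff {X Y : Matrix n n K} (hX : X.PosDef) (hY : Y.PosDef) :
    (X⁻¹ - Y⁻¹).PosDef ↔ (Y - X).PosDef := by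
  refine ⟨fun h => ?_, hX.inv_sub_inv hY⟩
  have : Invertible X := hX.isUnit.invertible
  have : Invertible Y := hY.isUnit.invertible
  simpa only [inv_inv_of_invertible] using hY.inv.inv_sub_inv hX.inv h

end Matrix

theorem Upsilon_add_Q22_negDef_iff_general {n : ℕ}
    (M P₀ Λ22 : Matrix (Fin n) (Fin n) ℝ)
    (hM : Mᵀ = M) (hMinv : IsUnit M)
    (hP₀M : (P₀ - M).PosDef) (hMΛ : (-(M + Λ22)).PosDef) :
    (-((-M - M * (P₀ - M)⁻¹ * M) + (M - M * (M + Λ22)⁻¹ * M))).PosDef ↔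
      (-(P₀ + Λ22)).PosDef := by
  have hM_star : star M = M := by
    rw [star_eq_conjTranspose, conjTranspose_eq_transpose_of_trivial, hM]
  have hcongr : -((-M - M * (P₀ - M)⁻¹ * M) + (M - M * (M + Λ22)⁻¹ * M)) =
      M * ((P₀ - M)⁻¹ - (-(M + Λ22))⁻¹) * star M := by
    rw [hM_star, Matrix.inv_neg]
    noncomm_ring
  rw [hcongr, hMinv.posDef_star_right_conjugate_iff, posDef_inv_sub_inv_iff hP₀M hMΛ]
  congr! 1
  abel

/-- With `Q²² = M − M(M+Λ²²)⁻¹M` and `Υ(P₀) = −M − M(P₀−M)⁻¹M`, one has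
`Υ(P₀) + Q²² ≺ 0` if and only if `P₀ + Λ²² ≺ 0`. -/
theorem Upsilon_add_Q22_negDef_iff {n : ℕ}
    (M P₀ Λ22 : Matrix (Fin n) (Fin n) ℝ)
    (hM : Mᵀ = M) (hMinv : IsUnit M) (hP₀ : P₀ᵀ = P₀) (hΛ22 : Λ22ᵀ = Λ22)
    (hP₀M : (P₀ - M).PosDef) (hMΛ : (-(M + Λ22)).PosDef) :
    (-((-M - M * (P₀ - M)⁻¹ * M) + (M - M * (M + Λ22)⁻¹ * M))).PosDef ↔
      (-(P₀ + Λ22)).PosDef :=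
  Upsilon_add_Q22_negDef_iff_general M P₀ Λ22 hM hMinv hP₀M hMΛ
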